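/- Let (A, C, B) be a recollement of abelian categories, C₁ = {C ∈ C : i^* j_* j^*(C) = 0}, and B₁ = {B ∈ B : B ≅ j^*(C) for some C ∈ C₁}, with the induced exact structures. Then the restrictions i^! : C₁ → A and j_* : B₁ → C are exact functors (they preserve admissible short exact sequences). -/

import Mathlib

open CategoryTheory CategoryTheory.Limits

universe v₁ v₂ v₃ u₁ u₂ u₃

/-- A recollement of abelian categories `(𝒜, 𝒞, ℬ)`, consisting of additive functors
`i_* : 𝒜 ⥤ 𝒞`, `i^*, i^! : 𝒞 ⥤ 𝒜`, `j^* : 𝒞 ⥤ ℬ`, `j_!, j_* : ℬ ⥤ 𝒞` with adjoint pairs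
`(i^*, i_*)`, `(i_*, i^!)`, `(j_!, j^*)`, `(j^*, j_*)`, with `i_*`, `j_!`, `j_*` fully faithful
and the essential image of `i_*` equal to the kernel of `j^*`. -/
structure Recollement (𝒜 : Type u₁) (𝒞 : Type u₂) (ℬ : Type u₃)
    [Category.{v₁} 𝒜] [Category.{v₂} 𝒞] [Category.{v₃} ℬ]
    [Abelian 𝒜] [Abelian 𝒞] [Abelian ℬ] where
  /-- the functor `i^* : 𝒞 ⥤ 𝒜` -/
  iStar : 𝒞 ⥤ 𝒜
  /-- the functor `i_* : 𝒜 ⥤ 𝒞` -/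
  iIns : 𝒜 ⥤ 𝒞
  /-- the functor `i^! : 𝒞 ⥤ 𝒜` -/
  iShriek : 𝒞 ⥤ 𝒜
  /-- the functor `j_! : ℬ ⥤ 𝒞` -/
  jShriek : ℬ ⥤ 𝒞
  /-- the functor `j^* : 𝒞 ⥤ ℬ` -/
  jStar : 𝒞 ⥤ ℬ
  /-- the functor `j_* : ℬ ⥤ 𝒞` -/
  jIns : ℬ ⥤ 𝒞
  iStar_additive : iStar.Additive
  iIns_additive : iIns.Additive
  iShriek_additive : iShriek.Additive
  jShriek_additive : jShriek.Additive
  jStar_additive : jStar.Additive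
  jIns_additive : jIns.Additive
  /-- the adjunction `i^* ⊣ i_*` -/
  adj₁ : iStar ⊣ iIns
  /-- the adjunction `i_* ⊣ i^!` -/
  adj₂ : iIns ⊣ iShriek
  /-- the adjunction `j_! ⊣ j^*` -/
  adj₃ : jShriek ⊣ jStar
  /-- the adjunction `j^* ⊣ j_*` -/
  adj₄ : jStar ⊣ jIns
  iIns_full : iIns.Full
  iIns_faithful : iIns.Faithful
  jShriek_full : jShriek.Full
  jShriek_faithful : jShriek.Faithful
  jIns_full : jIns.Full
  jIns_faithful : jIns.Faithful
  /-- `im i_* = ker j^*` -/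
  im_eq_ker : ∀ X : 𝒞, IsZero (jStar.obj X) ↔ ∃ A₀ : 𝒜, Nonempty (iIns.obj A₀ ≅ X)

variable {𝒜 : Type u₁} {𝒞 : Type u₂} {ℬ : Type u₃}
  [Category.{v₁} 𝒜] [Category.{v₂} 𝒞] [Category.{v₃} ℬ]
  [Abelian 𝒜] [Abelian 𝒞] [Abelian ℬ]

/-- `0 ⟶ X ⟶ Y ⟶ Z ⟶ 0` is a short exact sequence. -/
def IsSES {𝒟 : Type*} [Category 𝒟] [Abelian 𝒟] {X Y Z : 𝒟}
    (f : X ⟶ Y) (g : Y ⟶ Z) : Prop :=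
  ∃ w : f ≫ g = 0, (ShortComplex.mk f g w).ShortExact

/-- `X` belongs to `𝒞₁ = {C ∈ 𝒞 : i^* j_* j^*(C) = 0}`. -/
def InC₁ (R : Recollement 𝒜 𝒞 ℬ) (X : 𝒞) : Prop :=
  IsZero (R.iStar.obj (R.jIns.obj (R.jStar.obj X)))

/-- `Y` belongs to `ℬ₁ = {B ∈ ℬ : B ≅ j^*(C) for some C ∈ 𝒞₁}`. -/
def InB₁ (R : Recollement 𝒜 𝒞 ℬ) (Y : ℬ) : Prop :=
  ∃ X : 𝒞, InC₁ R X ∧ Nonempty (Y ≅ R.jStar.obj X)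

/-! `j_*` is left exact, and `j_* g` is an epimorphism as soon as `j^* j_* g ≅ g` is one and
`i^* j_* Z = 0`, because an object killed by both `i^*` and `j^*` is zero. The functor `i^!` is
left exact too. To see that it preserves epimorphisms, apply the snake lemma to the unit
`η : S ⟶ j_* j^* S` of a short exact sequence `S = (X ⟶ Y ⟶ Z)`: the counit `i_* i^! ⟶ 𝟭` is a
kernel of `η`, so the kernel row is `i_* i^! S`, and the connecting morphism lands in
`coker η_X`, which vanishes because `η_X` is an epimorphism for `X ∈ 𝒞₁`. -/

namespace CategoryTheory.ShortComplex

lemma ShortExact.map_of_preservesFiniteLimits {C D : Type*} [Category C] [Category D]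
    [Abelian C] [Abelian D] {S : ShortComplex C} (hS : S.ShortExact) (F : C ⥤ D)
    [F.PreservesZeroMorphisms] [PreservesFiniteLimits F] [Epi (F.map S.g)] :
    (S.map F).ShortExact :=
  have := hS.mono_f
  { exact := hS.exact.map_of_mono_of_preservesKernel F hS.mono_f inferInstance
    mono_f := F.map_mono S.f
    epi_g := ‹Epi (F.map S.g)› }

end CategoryTheory.ShortComplex

namespace Recollement

variable (R : Recollement 𝒜 𝒞 ℬ)

instance : R.iIns.Full := R.iIns_full
instance : R.iIns.Faithful := R.iIns_faithful
instance : R.jIns.Full := R.jIns_full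
instance : R.jIns.Faithful := R.jIns_faithful
instance : R.iStar.IsLeftAdjoint := R.adj₁.isLeftAdjoint
instance : R.iShriek.IsRightAdjoint := R.adj₂.isRightAdjoint
instance : R.jStar.IsLeftAdjoint := R.adj₄.isLeftAdjoint
instance : R.jStar.IsRightAdjoint := R.adj₃.isRightAdjoint
instance : R.jIns.IsRightAdjoint := R.adj₄.isRightAdjoint
instance : IsIso R.adj₁.counit := R.adj₁.counit_isIso_of_R_fully_faithful
instance : IsIso R.adj₄.counit := R.adj₄.counit_isIso_of_R_fully_faithful

lemma isZero_jStar_iIns (A : 𝒜) : IsZero (R.jStar.obj (R.iIns.obj A)) :=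
  (R.im_eq_ker _).mpr ⟨A, ⟨Iso.refl _⟩⟩

lemma iIns_hom_jIns_eq_zero {A : 𝒜} {B : ℬ} (φ : R.iIns.obj A ⟶ R.jIns.obj B) : φ = 0 := by
  rw [← (R.adj₄.homEquiv _ _).apply_symm_apply φ,
    (R.isZero_jStar_iIns A).eq_zero_of_src ((R.adj₄.homEquiv _ _).symm φ),
    Adjunction.homEquiv_unit, Functor.map_zero, comp_zero]

lemma isZero_of_isZero_jStar_of_isZero_iStar {X : 𝒞} (h₁ : IsZero (R.jStar.obj X))
    (h₂ : IsZero (R.iStar.obj X)) : IsZero X := by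
  obtain ⟨A, ⟨e⟩⟩ := (R.im_eq_ker X).mp h₁
  have hA : IsZero A :=
    (h₂.of_iso (R.iStar.mapIso e)).of_iso (asIso (R.adj₁.counit.app A)).symm
  exact (R.iIns.map_isZero hA).of_iso e.symm

lemma epi_of_epi_jStar_map {P Q : 𝒞} (φ : P ⟶ Q) [Epi (R.jStar.map φ)]
    (hQ : IsZero (R.iStar.obj Q)) : Epi φ := by
  apply Abelian.epi_of_cokernel_π_eq_zero
  suffices IsZero (cokernel φ) from this.eq_of_tgt _ _
  apply R.isZero_of_isZero_jStar_of_isZero_iStar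
  · refine IsZero.of_epi_eq_zero (R.jStar.map (cokernel.π φ)) ?_
    rw [← cancel_epi (R.jStar.map φ), ← Functor.map_comp, cokernel.condition,
      Functor.map_zero, comp_zero]
  · exact IsZero.of_epi_eq_zero (R.iStar.map (cokernel.π φ)) (hQ.eq_of_src _ _)

lemma epi_adj₄_unit_app {X : 𝒞} (hX : InC₁ R X) : Epi (R.adj₄.unit.app X) :=
  R.epi_of_epi_jStar_map _ hX

lemma isZero_iStar_jIns_of_inB₁ {Y : ℬ} (hY : InB₁ R Y) :
    IsZero (R.iStar.obj (R.jIns.obj Y)) := by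
  obtain ⟨X, hX, ⟨e⟩⟩ := hY
  exact hX.of_iso (R.iStar.mapIso (R.jIns.mapIso e))

lemma epi_jIns_map {Y Z : ℬ} (g : Y ⟶ Z) [Epi g] (hZ : InB₁ R Z) : Epi (R.jIns.map g) := by
  have : Epi (R.jStar.map (R.jIns.map g)) := by
    rw [← epi_comp_iff_of_isIso _ (R.adj₄.counit.app Z)]
    simp only [Functor.id_obj, Adjunction.counit_naturality]
    infer_instance
  exact R.epi_of_epi_jStar_map _ (R.isZero_iStar_jIns_of_inB₁ hZ)

lemma isZero_jStar_kernel_adj₄_unit_app (Z : 𝒞) :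
    IsZero (R.jStar.obj (kernel (R.adj₄.unit.app Z))) := by
  refine IsZero.of_mono_eq_zero (R.jStar.map (kernel.ι _)) ?_
  rw [← cancel_mono (R.jStar.map (R.adj₄.unit.app Z)), ← Functor.map_comp, kernel.condition,
    Functor.map_zero, zero_comp]

lemma exact_adj₂_counit_app_adj₄_unit_app (Z : 𝒞) :
    (ShortComplex.mk (R.adj₂.counit.app Z) (R.adj₄.unit.app Z)
      (R.iIns_hom_jIns_eq_zero _)).Exact := by
  rw [ShortComplex.exact_iff_epi_kernel_lift]
  -- `ker η_Z = i_* A`, and the adjunction `i_* ⊣ i^!` splits the comparison map to it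
  obtain ⟨A, ⟨e⟩⟩ := (R.im_eq_ker _).mp (R.isZero_jStar_kernel_adj₄_unit_app Z)
  let s := e.inv ≫ R.iIns.map (R.adj₂.homEquiv _ _ (e.hom ≫ kernel.ι _))
  have hs : s ≫ R.adj₂.counit.app Z = kernel.ι _ := by
    simp [s, Adjunction.homEquiv_unit]
  have : s ≫ kernel.lift _ (R.adj₂.counit.app Z) (R.iIns_hom_jIns_eq_zero _) = 𝟙 _ := by
    ext
    simp [hs]
  exact (IsSplitEpi.mk' ⟨s, this⟩).epi

lemma mono_adj₂_counit_app (Z : 𝒞) : Mono (R.adj₂.counit.app Z) := by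
  refine Abelian.mono_of_kernel_ι_eq_zero _ ?_
  have hK : IsZero (R.jStar.obj (kernel (R.adj₂.counit.app Z))) :=
    IsZero.of_mono (R.jStar.map (kernel.ι _)) (R.isZero_jStar_iIns _)
  obtain ⟨A, ⟨e⟩⟩ := (R.im_eq_ker _).mp hK
  obtain ⟨a, ha⟩ := R.iIns.map_surjective (e.hom ≫ kernel.ι _)
  have : a = 0 := (R.adj₂.homEquiv _ _).symm.injective (by simp [Adjunction.homEquiv_counit, ha])
  rw [← cancel_epi e.hom, ← ha, this, Functor.map_zero, comp_zero]

noncomputable def snakeInput {S : ShortComplex 𝒞} (hS : S.ShortExact) :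
    ShortComplex.SnakeInput 𝒞 where
  L₀ := S.map (R.iShriek ⋙ R.iIns)
  L₁ := S
  L₂ := S.map (R.jStar ⋙ R.jIns)
  L₃ := cokernel (S.mapNatTrans R.adj₄.unit)
  v₀₁ := S.mapNatTrans R.adj₂.counit
  v₁₂ := S.mapNatTrans R.adj₄.unit
  v₂₃ := cokernel.π _
  w₀₂ := by ext <;> exact R.iIns_hom_jIns_eq_zero _
  w₁₃ := cokernel.condition _
  h₀ := by
    have := R.mono_adj₂_counit_app
    apply ShortComplex.isLimitOfIsLimitπ <;>
      exact (KernelFork.isLimitMapConeEquiv _ _).symm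
        (R.exact_adj₂_counit_app_adj₄_unit_app _).fIsKernel
  h₃ := cokernelIsCokernel _
  L₁_exact := hS.exact
  epi_L₁_g := hS.epi_g
  L₂_exact := hS.exact.map_of_mono_of_preservesKernel _ hS.mono_f inferInstance
  mono_L₂_f := have := hS.mono_f; (R.jStar ⋙ R.jIns).map_mono S.f

lemma epi_iShriek_map {S : ShortComplex 𝒞} (hS : S.ShortExact) (hX₁ : InC₁ R S.X₁) :
    Epi (R.iShriek.map S.g) := by
  let D := R.snakeInput hS
  have : Epi D.v₁₂.τ₁ := R.epi_adj₄_unit_app hX₁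
  have hL₃ : IsZero D.L₃.X₁ :=
    IsZero.of_epi_eq_zero D.v₂₃.τ₁ ((cancel_epi D.v₁₂.τ₁).mp (by rw [D.w₁₃_τ₁, comp_zero]))
  have : Epi D.L₀.g := D.L₁'_exact.epi_f (hL₃.eq_of_tgt _ _)
  exact R.iIns.epi_of_epi_map this

end Recollement

/-- The restrictions `i^! : 𝒞₁ → 𝒜` and `j_* : ℬ₁ → 𝒞` are exact functors: they send
admissible short exact sequences (short exact sequences of the ambient abelian category
all of whose terms lie in the subcategory) to short exact sequences. -/
theorem stmt_11 (R : Recollement 𝒜 𝒞 ℬ) :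
    (∀ {X Y Z : 𝒞} (f : X ⟶ Y) (g : Y ⟶ Z), InC₁ R X → InC₁ R Y → InC₁ R Z →
        IsSES f g → IsSES (R.iShriek.map f) (R.iShriek.map g)) ∧
    (∀ {X Y Z : ℬ} (f : X ⟶ Y) (g : Y ⟶ Z), InB₁ R X → InB₁ R Y → InB₁ R Z →
        IsSES f g → IsSES (R.jIns.map f) (R.jIns.map g)) := by
  constructor
  · rintro X Y Z f g hX - - ⟨_, hS⟩
    have := R.epi_iShriek_map hS hX
    exact ⟨_, hS.map_of_preservesFiniteLimits R.iShriek⟩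
  · rintro X Y Z f g - - hZ ⟨_, hS⟩
    have := hS.epi_g
    have := R.epi_jIns_map g hZ
    exact ⟨_, hS.map_of_preservesFiniteLimits R.jIns⟩
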